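/- Let ≺ be a uniform linear ordering on {0,1,…,k-1}^n with n ≥ 3 whose induced ordering on the alphabet is the usual order, and define [a,b] ⪯ [c,d] iff cb ≺ da on two-letter words, and write [a,b] ≈ [c,d] if both [a,b] ⪯ [c,d] and [c,d] ⪯ [a,b]. Then ⪯ satisfies the ultrametric property: if a < b < c then [a,c] ≈ max([a,b],[b,c]), where max is with respect to ⪯. -/

import Mathlib

/-- Substitution: replace each wildcard `*ⱼ` in the parameter word `p` by `w j`. -/
def subst {k d n : ℕ} (p : Fin n → Sum (Fin k) (Fin d)) (w : Fin d → Fin k) :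
    Fin n → Fin k :=
  fun i => Sum.elim id w (p i)

/-- `p` is a `d`-parameter word: every wildcard occurs at least once. -/
def IsPWord {k d n : ℕ} (p : Fin n → Sum (Fin k) (Fin d)) : Prop :=
  ∀ j : Fin d, ∃ i, p i = Sum.inr j

/-- `p` is canonical: the first occurrence of `*ⱼ₁` precedes the first occurrence of `*ⱼ₂`
whenever `j₁ < j₂` (equivalently, every occurrence of `*ⱼ₂` is preceded by some occurrence
of `*ⱼ₁`). -/
def Canonical {k d n : ℕ} (p : Fin n → Sum (Fin k) (Fin d)) : Prop :=
  ∀ j₁ j₂ : Fin d, j₁ < j₂ → ∀ i₂ : Fin n, p i₂ = Sum.inr j₂ →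
    ∃ i₁ : Fin n, i₁ < i₂ ∧ p i₁ = Sum.inr j₁

/-- Lexicographic order on words induced by an order `lt` on letters. -/
def LexLT {k d : ℕ} (lt : Fin k → Fin k → Prop) (w w' : Fin d → Fin k) : Prop :=
  ∃ i : Fin d, lt (w i) (w' i) ∧ ∀ j : Fin d, j < i → w j = w' j

/-- A linear ordering `r` on `[k]^n` is uniform if its restrictions to all `d`-subcubes,
transported via canonical parameter words, agree. -/
def Uniform {k n : ℕ} (r : (Fin n → Fin k) → (Fin n → Fin k) → Prop) : Prop :=
  ∀ (d : ℕ) (p q : Fin n → Sum (Fin k) (Fin d)),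
    IsPWord p → Canonical p → IsPWord q → Canonical q →
    ∀ w w' : Fin d → Fin k, (r (subst p w) (subst p w') ↔ r (subst q w) (subst q w'))

/-- The relation `[a,b] ⪯ [c,d]` on nontrivial intervals of `[k]`, defined from a linear
ordering `r` on `[k]^n` via the 2-subcube given by the parameter word `p`:
`[a,b] ⪯ [c,d]` iff the word `cb` precedes the word `da`. -/
def IntRel {k n : ℕ} (r : (Fin n → Fin k) → (Fin n → Fin k) → Prop)
    (p : Fin n → Sum (Fin k) (Fin 2)) (a b c d : Fin k) : Prop :=
  r (subst p ![c, b]) (subst p ![d, a])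

/-- Composition of parameter words. -/
def pcomp {k n d e : ℕ} (p : Fin n → Sum (Fin k) (Fin d))
    (s : Fin d → Sum (Fin k) (Fin e)) : Fin n → Sum (Fin k) (Fin e) :=
  fun i => Sum.elim Sum.inl s (p i)

theorem subst_pcomp {k n d e : ℕ} (p : Fin n → Sum (Fin k) (Fin d))
    (s : Fin d → Sum (Fin k) (Fin e)) (w : Fin e → Fin k) :
    subst (pcomp p s) w = subst p (subst s w) := by
  funext i
  cases hpi : p i <;> simp [subst, pcomp, hpi]

theorem pcomp_pword {k n d e : ℕ} {p : Fin n → Sum (Fin k) (Fin d)}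
    {s : Fin d → Sum (Fin k) (Fin e)} (hp : IsPWord p) (hs : IsPWord s) :
    IsPWord (pcomp p s) := by
  intro j
  obtain ⟨j', hj'⟩ := hs j
  obtain ⟨i, hi⟩ := hp j'
  exact ⟨i, by simp [pcomp, hi, hj']⟩

theorem pcomp_canonical {k n d e : ℕ} {p : Fin n → Sum (Fin k) (Fin d)}
    {s : Fin d → Sum (Fin k) (Fin e)} (hpc : Canonical p) (hsc : Canonical s) :
    Canonical (pcomp p s) := by
  intro j1 j2 h12 i2 hi2
  cases hpi : p i2 with
  | inl x => simp [pcomp, hpi] at hi2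
  | inr jd =>
    have hs2 : s jd = Sum.inr j2 := by simpa [pcomp, hpi] using hi2
    obtain ⟨jd', hlt, hs1⟩ := hsc j1 j2 h12 jd hs2
    obtain ⟨i1, hi1, hp1⟩ := hpc jd' jd hlt i2 hpi
    exact ⟨i1, hi1, by simp [pcomp, hp1, hs1]⟩

theorem canon2 {k n : ℕ} (s : Fin n → Sum (Fin k) (Fin 2))
    (h : ∀ i2, s i2 = Sum.inr 1 → ∃ i1, i1 < i2 ∧ s i1 = Sum.inr 0) :
    Canonical s := by
  intro j1 j2 h12 i2 hi2
  have hv1 : j1.val < j2.val := h12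
  have h1 : j1 = 0 := by omega
  have h2 : j2 = 1 := by omega
  subst h1; subst h2
  exact h i2 hi2

theorem canon1 {k n : ℕ} (t : Fin n → Sum (Fin k) (Fin 1)) : Canonical t := by
  intro j1 j2 h12
  rw [Subsingleton.elim j1 j2] at h12
  exact absurd h12 (lt_irrefl _)

/-- For a uniform linear ordering on `[k]^n`, `n ≥ 3`, with the usual induced alphabet
ordering, the relation `⪯` satisfies the ultrametric property: for `a < b < c`,
`[a,c] ≈ max([a,b],[b,c])`.  Here the maximum is characterized by being `⪰` the other
interval, so the claim is the conjunction of the two possible cases. -/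
theorem stmt7 (k n : ℕ) (hn : 3 ≤ n)
    (r : (Fin n → Fin k) → (Fin n → Fin k) → Prop)
    (hr : IsStrictTotalOrder (Fin n → Fin k) r) (hu : Uniform r)
    (hbase : ∀ p : Fin n → Sum (Fin k) (Fin 1), IsPWord p → Canonical p →
      ∀ x y : Fin k, x < y → r (subst p (fun _ => x)) (subst p (fun _ => y)))
    (p : Fin n → Sum (Fin k) (Fin 2)) (hp : IsPWord p) (hpc : Canonical p)
    (a b c : Fin k) (hab : a < b) (hbc : b < c) :
    (IntRel r p a b b c → (IntRel r p a c b c ∧ IntRel r p b c a c)) ∧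
    (IntRel r p b c a b → (IntRel r p a c a b ∧ IntRel r p a b a c)) := by
  have hac : a < c := hab.trans hbc
  have rtrans : ∀ {x y z}, r x y → r y z → r x z :=
    fun {x y z} hxy hyz => hr.trans x y z hxy hyz
  have rirr : ∀ x, ¬ r x x := hr.irrefl
  -- the canonical 3-parameter word
  set P3 : Fin n → Sum (Fin k) (Fin 3) :=
    fun i => if h : (i : ℕ) < 3 then Sum.inr ⟨i.1, h⟩ else Sum.inl a with hP3def
  have hP3 : IsPWord P3 := by
    intro j
    refine ⟨⟨j.1, lt_of_lt_of_le j.2 hn⟩, ?_⟩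
    simp [hP3def, j.2]
  have hP3c : Canonical P3 := by
    intro j1 j2 h12 i2 hi2
    by_cases h : (i2 : ℕ) < 3
    · simp only [hP3def, dif_pos h] at hi2
      have hval : (i2 : ℕ) = j2.1 := by
        have := (Sum.inr.inj hi2)
        exact congrArg Fin.val this
      have hj1n : (j1 : ℕ) < n := lt_of_lt_of_le j1.2 hn
      refine ⟨⟨j1.1, hj1n⟩, ?_, ?_⟩
      · have h12v : j1.val < j2.val := h12
        exact Fin.mk_lt_mk.mpr (by omega)
      · simp [hP3def, j1.2]
    · simp [hP3def, dif_neg h] at hi2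
  -- transfer along canonical 2-parameter words of length 3
  have T : ∀ s : Fin 3 → Sum (Fin k) (Fin 2), IsPWord s → Canonical s →
      ∀ u v : Fin 2 → Fin k,
        (r (subst p u) (subst p v) ↔ r (subst P3 (subst s u)) (subst P3 (subst s v))) := by
    intro s hs hsc u v
    rw [← subst_pcomp, ← subst_pcomp]
    exact hu 2 p (pcomp P3 s) hp hpc (pcomp_pword hP3 hs) (pcomp_canonical hP3c hsc) u v
  -- base order transferred into the 3-cube
  have T1 : ∀ t : Fin 3 → Sum (Fin k) (Fin 1), IsPWord t →
      ∀ x y : Fin k, x < y →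
        r (subst P3 (subst t (fun _ => x))) (subst P3 (subst t (fun _ => y))) := by
    intro t ht x y hxy
    have := hbase (pcomp P3 t) (pcomp_pword hP3 ht) (pcomp_canonical hP3c (canon1 t)) x y hxy
    rwa [subst_pcomp, subst_pcomp] at this
  -- base order transferred into the 2-cube
  have T1p : ∀ t : Fin 2 → Sum (Fin k) (Fin 1), IsPWord t →
      ∀ x y : Fin k, x < y →
        r (subst p (subst t (fun _ => x))) (subst p (subst t (fun _ => y))) := by
    intro t ht x y hxy
    have := hbase (pcomp p t) (pcomp_pword hp ht) (pcomp_canonical hpc (canon1 t)) x y hxy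
    rwa [subst_pcomp, subst_pcomp] at this
  -- shape transfer lemmas
  have TA : ∀ z x y x' y' : Fin k,
      (r (subst p ![x, y]) (subst p ![x', y']) ↔
        r (subst P3 ![x, y, z]) (subst P3 ![x', y', z])) := by
    intro z x y x' y'
    have hev : ∀ x y : Fin k,
        subst (![Sum.inr 0, Sum.inr 1, Sum.inl z] : Fin 3 → Sum (Fin k) (Fin 2)) ![x, y]
          = ![x, y, z] := by
      intro x y; funext i; fin_cases i <;> rfl
    have hw : IsPWord (![Sum.inr 0, Sum.inr 1, Sum.inl z] : Fin 3 → Sum (Fin k) (Fin 2)) := by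
      intro j; fin_cases j
      · exact ⟨0, rfl⟩
      · exact ⟨1, rfl⟩
    have hc : Canonical (![Sum.inr 0, Sum.inr 1, Sum.inl z] : Fin 3 → Sum (Fin k) (Fin 2)) := by
      apply canon2
      intro i2 hi2; fin_cases i2
      · exact absurd hi2 (by simp)
      · exact ⟨0, by decide, rfl⟩
      · exact absurd hi2 (by simp)
    rw [T _ hw hc ![x, y] ![x', y'], hev, hev]
  have TB : ∀ z x y x' y' : Fin k,
      (r (subst p ![x, y]) (subst p ![x', y']) ↔
        r (subst P3 ![x, z, y]) (subst P3 ![x', z, y'])) := by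
    intro z x y x' y'
    have hev : ∀ x y : Fin k,
        subst (![Sum.inr 0, Sum.inl z, Sum.inr 1] : Fin 3 → Sum (Fin k) (Fin 2)) ![x, y]
          = ![x, z, y] := by
      intro x y; funext i; fin_cases i <;> rfl
    have hw : IsPWord (![Sum.inr 0, Sum.inl z, Sum.inr 1] : Fin 3 → Sum (Fin k) (Fin 2)) := by
      intro j; fin_cases j
      · exact ⟨0, rfl⟩
      · exact ⟨2, rfl⟩
    have hc : Canonical (![Sum.inr 0, Sum.inl z, Sum.inr 1] : Fin 3 → Sum (Fin k) (Fin 2)) := by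
      apply canon2
      intro i2 hi2; fin_cases i2
      · exact absurd hi2 (by simp)
      · exact absurd hi2 (by simp)
      · exact ⟨0, by decide, rfl⟩
    rw [T _ hw hc ![x, y] ![x', y'], hev, hev]
  have TC : ∀ z x y x' y' : Fin k,
      (r (subst p ![x, y]) (subst p ![x', y']) ↔
        r (subst P3 ![z, x, y]) (subst P3 ![z, x', y'])) := by
    intro z x y x' y'
    have hev : ∀ x y : Fin k,
        subst (![Sum.inl z, Sum.inr 0, Sum.inr 1] : Fin 3 → Sum (Fin k) (Fin 2)) ![x, y]
          = ![z, x, y] := by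
      intro x y; funext i; fin_cases i <;> rfl
    have hw : IsPWord (![Sum.inl z, Sum.inr 0, Sum.inr 1] : Fin 3 → Sum (Fin k) (Fin 2)) := by
      intro j; fin_cases j
      · exact ⟨1, rfl⟩
      · exact ⟨2, rfl⟩
    have hc : Canonical (![Sum.inl z, Sum.inr 0, Sum.inr 1] : Fin 3 → Sum (Fin k) (Fin 2)) := by
      apply canon2
      intro i2 hi2; fin_cases i2
      · exact absurd hi2 (by simp)
      · exact absurd hi2 (by simp)
      · exact ⟨1, by decide, rfl⟩
    rw [T _ hw hc ![x, y] ![x', y'], hev, hev]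
  have TD : ∀ x y x' y' : Fin k,
      (r (subst p ![x, y]) (subst p ![x', y']) ↔
        r (subst P3 ![x, y, x]) (subst P3 ![x', y', x'])) := by
    intro x y x' y'
    have hev : ∀ x y : Fin k,
        subst (![Sum.inr 0, Sum.inr 1, Sum.inr 0] : Fin 3 → Sum (Fin k) (Fin 2)) ![x, y]
          = ![x, y, x] := by
      intro x y; funext i; fin_cases i <;> rfl
    have hw : IsPWord (![Sum.inr 0, Sum.inr 1, Sum.inr 0] : Fin 3 → Sum (Fin k) (Fin 2)) := by
      intro j; fin_cases j
      · exact ⟨0, rfl⟩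
      · exact ⟨1, rfl⟩
    have hc : Canonical (![Sum.inr 0, Sum.inr 1, Sum.inr 0] : Fin 3 → Sum (Fin k) (Fin 2)) := by
      apply canon2
      intro i2 hi2; fin_cases i2
      · exact absurd hi2 (by simp)
      · exact ⟨0, by decide, rfl⟩
      · exact absurd hi2 (by simp)
    rw [T _ hw hc ![x, y] ![x', y'], hev, hev]
  have TE : ∀ x y x' y' : Fin k,
      (r (subst p ![x, y]) (subst p ![x', y']) ↔
        r (subst P3 ![x, x, y]) (subst P3 ![x', x', y'])) := by
    intro x y x' y'
    have hev : ∀ x y : Fin k,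
        subst (![Sum.inr 0, Sum.inr 0, Sum.inr 1] : Fin 3 → Sum (Fin k) (Fin 2)) ![x, y]
          = ![x, x, y] := by
      intro x y; funext i; fin_cases i <;> rfl
    have hw : IsPWord (![Sum.inr 0, Sum.inr 0, Sum.inr 1] : Fin 3 → Sum (Fin k) (Fin 2)) := by
      intro j; fin_cases j
      · exact ⟨0, rfl⟩
      · exact ⟨2, rfl⟩
    have hc : Canonical (![Sum.inr 0, Sum.inr 0, Sum.inr 1] : Fin 3 → Sum (Fin k) (Fin 2)) := by
      apply canon2
      intro i2 hi2; fin_cases i2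
      · exact absurd hi2 (by simp)
      · exact absurd hi2 (by simp)
      · exact ⟨0, by decide, rfl⟩
    rw [T _ hw hc ![x, y] ![x', y'], hev, hev]
  -- base facts in the 3-cube
  have BzwW : ∀ z w x y : Fin k, x < y → r (subst P3 ![z, w, x]) (subst P3 ![z, w, y]) := by
    intro z w x y hxy
    have hev : ∀ x : Fin k,
        subst (![Sum.inl z, Sum.inl w, Sum.inr 0] : Fin 3 → Sum (Fin k) (Fin 1))
          (fun _ => x) = ![z, w, x] := by
      intro x; funext i; fin_cases i <;> rfl
    have hw : IsPWord (![Sum.inl z, Sum.inl w, Sum.inr 0] : Fin 3 → Sum (Fin k) (Fin 1)) := by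
      intro j
      refine ⟨2, ?_⟩
      rw [Subsingleton.elim j 0]
      rfl
    have := T1 _ hw x y hxy
    rwa [hev, hev] at this
  have BzWw : ∀ z w x y : Fin k, x < y → r (subst P3 ![z, x, w]) (subst P3 ![z, y, w]) := by
    intro z w x y hxy
    have hev : ∀ x : Fin k,
        subst (![Sum.inl z, Sum.inr 0, Sum.inl w] : Fin 3 → Sum (Fin k) (Fin 1))
          (fun _ => x) = ![z, x, w] := by
      intro x; funext i; fin_cases i <;> rfl
    have hw : IsPWord (![Sum.inl z, Sum.inr 0, Sum.inl w] : Fin 3 → Sum (Fin k) (Fin 1)) := by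
      intro j
      refine ⟨1, ?_⟩
      rw [Subsingleton.elim j 0]
      rfl
    have := T1 _ hw x y hxy
    rwa [hev, hev] at this
  -- base fact in the 2-cube
  have B2 : ∀ z x y : Fin k, x < y → r (subst p ![x, z]) (subst p ![y, z]) := by
    intro z x y hxy
    have hev : ∀ x : Fin k,
        subst (![Sum.inr 0, Sum.inl z] : Fin 2 → Sum (Fin k) (Fin 1))
          (fun _ => x) = ![x, z] := by
      intro x; funext i; fin_cases i <;> rfl
    have hw : IsPWord (![Sum.inr 0, Sum.inl z] : Fin 2 → Sum (Fin k) (Fin 1)) := by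
      intro j
      refine ⟨0, ?_⟩
      rw [Subsingleton.elim j 0]
      rfl
    have := T1p _ hw x y hxy
    rwa [hev, hev] at this
  -- distinct words have distinct images
  have hne : ∀ x y x' y' : Fin k, x ≠ x' → subst p ![x, y] ≠ subst p ![x', y'] := by
    intro x y x' y' hxx heq
    obtain ⟨i, hi⟩ := hp 0
    have := congrFun heq i
    simp [subst, hi] at this
    exact hxx this
  constructor
  · -- case [a,b] ⪯ [b,c]
    intro H
    have H' : r (subst p ![b, b]) (subst p ![c, a]) := H
    constructor
    · -- [a,c] ⪯ [b,c] : bc ≺ ca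
      show r (subst p ![b, c]) (subst p ![c, a])
      rcases (haveI := hr; trichotomous_of r) (subst p ![b, c]) (subst p ![c, a]) with h | h | h
      · exact h
      · exact absurd h (hne _ _ _ _ hbc.ne)
      · exfalso
        have e1 : r (subst P3 ![b, b, c]) (subst P3 ![c, a, c]) := (TA c b b c a).mp H'
        have e2 : r (subst P3 ![c, a, c]) (subst P3 ![b, c, b]) := (TD c a b c).mp h
        have e3 : r (subst P3 ![b, c, b]) (subst P3 ![c, c, a]) := (TB c b b c a).mp H'
        have e4 : r (subst P3 ![c, c, a]) (subst P3 ![b, b, c]) := (TE c a b c).mp h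
        have f1 : r (subst p ![b, c]) (subst p ![c, b]) :=
          (TC b b c c b).mpr (rtrans e1 e2)
        have f2 : r (subst p ![c, b]) (subst p ![b, c]) :=
          (TC b c b b c).mpr (rtrans e3 e4)
        exact rirr _ (rtrans f1 f2)
    · -- [b,c] ⪯ [a,c] : ac ≺ cb
      show r (subst p ![a, c]) (subst p ![c, b])
      rcases (haveI := hr; trichotomous_of r) (subst p ![a, c]) (subst p ![c, b]) with h | h | h
      · exact h
      · exact absurd h (hne _ _ _ _ hac.ne)
      · exfalso
        have g0 : r (subst p ![a, a]) (subst p ![c, a]) := B2 a a c hac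
        have b1 : r (subst P3 ![c, c, a]) (subst P3 ![c, c, b]) := BzwW c c a b hab
        have e1 : r (subst P3 ![c, c, b]) (subst P3 ![c, a, c]) := (TC c c b a c).mp h
        have b2 : r (subst P3 ![c, a, c]) (subst P3 ![c, b, c]) := BzWw c c a b hab
        have e2 : r (subst P3 ![c, b, c]) (subst P3 ![a, c, a]) := (TD c b a c).mp h
        have t3 : r (subst P3 ![c, c, a]) (subst P3 ![a, c, a]) :=
          rtrans (rtrans b1 e1) (rtrans b2 e2)
        have f1 : r (subst p ![c, a]) (subst p ![a, a]) := (TB c c a a a).mpr t3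
        exact rirr _ (rtrans g0 f1)
  · -- case [b,c] ⪯ [a,b]
    intro H
    have H' : r (subst p ![a, c]) (subst p ![b, b]) := H
    constructor
    · -- [a,c] ⪯ [a,b] : ac ≺ ba
      show r (subst p ![a, c]) (subst p ![b, a])
      rcases (haveI := hr; trichotomous_of r) (subst p ![a, c]) (subst p ![b, a]) with h | h | h
      · exact h
      · exact absurd h (hne _ _ _ _ hab.ne)
      · exfalso
        have e1 : r (subst P3 ![a, c, a]) (subst P3 ![b, b, a]) := (TA a a c b b).mp H'
        have e2 : r (subst P3 ![b, b, a]) (subst P3 ![a, a, c]) := (TE b a a c).mp h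
        have e3 : r (subst P3 ![a, a, c]) (subst P3 ![b, a, b]) := (TB a a c b b).mp H'
        have e4 : r (subst P3 ![b, a, b]) (subst P3 ![a, c, a]) := (TD b a a c).mp h
        have f1 : r (subst p ![c, a]) (subst p ![a, c]) :=
          (TC a c a a c).mpr (rtrans e1 e2)
        have f2 : r (subst p ![a, c]) (subst p ![c, a]) :=
          (TC a a c c a).mpr (rtrans e3 e4)
        exact rirr _ (rtrans f1 f2)
    · -- [a,b] ⪯ [a,c] : ab ≺ ca
      show r (subst p ![a, b]) (subst p ![c, a])
      rcases (haveI := hr; trichotomous_of r) (subst p ![a, b]) (subst p ![c, a]) with h | h | h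
      · exact h
      · exact absurd h (hne _ _ _ _ hac.ne)
      · exfalso
        have g0 : r (subst p ![a, a]) (subst p ![c, a]) := B2 a a c hac
        have b1 : r (subst P3 ![c, b, a]) (subst P3 ![c, c, a]) := BzWw c a b c hbc
        have e1 : r (subst P3 ![c, c, a]) (subst P3 ![c, a, b]) := (TC c c a a b).mp h
        have b2 : r (subst P3 ![c, a, b]) (subst P3 ![c, a, c]) := BzwW c a b c hbc
        have e2 : r (subst P3 ![c, a, c]) (subst P3 ![a, b, a]) := (TD c a a b).mp h
        have t3 : r (subst P3 ![c, b, a]) (subst P3 ![a, b, a]) :=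
          rtrans (rtrans b1 e1) (rtrans b2 e2)
        have f1 : r (subst p ![c, a]) (subst p ![a, a]) := (TB b c a a a).mpr t3
        exact rirr _ (rtrans g0 f1)
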